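/- Let Γ = Cay(V, S) be a cubelike graph on V = 𝔽₂^m with 0 ∉ S. Then for all a, b, c, d ∈ V and all real t, (1/2)(e_c − e_d)ᵀ H(t)(e_a − e_b) = 2^{1−m} · Σ_{x ∈ V, (d+c)·x = 1 and (b+a)·x = 1} exp(i t λ_x) (−1)^{x·(c+a)}. -/

import Mathlib

open Matrix Finset

noncomputable section

/-- The adjacency matrix of the Cayley (cubelike) graph `Cay(G, S)`. -/
def adjMatrix {G : Type*} [AddCommGroup G] [Fintype G] [DecidableEq G]
    (S : Finset G) : Matrix G G ℂ :=
  fun u v => if u + v ∈ S then 1 else 0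

/-- The transfer matrix `H(t) = exp(i t A)`. -/
def transferMatrix {G : Type*} [AddCommGroup G] [Fintype G] [DecidableEq G]
    (S : Finset G) (t : ℝ) : Matrix G G ℂ :=
  NormedSpace.exp (Complex.I • ((t : ℂ) • adjMatrix S))

/-- The standard basis vector `e_a` of `ℂ^V`. -/
def stdBasis {G : Type*} [DecidableEq G] (a : G) : G → ℂ :=
  fun v => if v = a then 1 else 0

/-- The eigenvalue `λ_x = ∑_{s ∈ S} (-1)^{x·s}` of a cubelike graph. -/
def lam {m : ℕ} (S : Finset (Fin m → ZMod 2)) (x : Fin m → ZMod 2) : ℤ :=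
  ∑ s ∈ S, (-1) ^ (x ⬝ᵥ s).val

/-- `(1/2)(e_c - e_d)ᵀ H(t)(e_a - e_b)
  = 2^{1-m} ∑_{x : (d+c)·x = 1, (b+a)·x = 1} exp(i t λ_x) (-1)^{x·(c+a)}`. -/
-- helper lemmas
lemma zmod2_cases : ∀ z : ZMod 2, z = 0 ∨ z = 1 := by decide

lemma zmod2_oneone : (1 : ZMod 2) + 1 = 0 := by decide

lemma zmod2_val2 : (2 : ZMod 2).val = 0 := rfl

lemma neg_one_val_add (z w : ZMod 2) :
    ((-1 : ℂ)) ^ ((z + w).val) = (-1) ^ z.val * (-1) ^ w.val := by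
  rcases zmod2_cases z with rfl | rfl <;> rcases zmod2_cases w with rfl | rfl <;>
    norm_num [zmod2_oneone, ZMod.val_one, zmod2_val2]

lemma pi_add_self {m : ℕ} (v : Fin m → ZMod 2) : v + v = 0 := by
  funext j
  rcases zmod2_cases (v j) with h | h <;> simp [h, zmod2_oneone]

lemma char_sum {m : ℕ} (w : Fin m → ZMod 2) (hw : w ≠ 0) :
    ∑ y : Fin m → ZMod 2, (-1 : ℂ) ^ ((y ⬝ᵥ w).val) = 0 := by
  have hex : ∃ j, w j ≠ 0 := by
    by_contra h
    push_neg at h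
    exact hw (funext fun j => h j)
  obtain ⟨j, hj⟩ := hex
  have hwj : w j = 1 := (zmod2_cases (w j)).resolve_left hj
  refine Finset.sum_involution (fun y _ => y + Pi.single j 1) ?_ ?_ (fun _ _ => mem_univ _) ?_
  · intro y _
    have hdot : ((y + Pi.single j 1) ⬝ᵥ w) = y ⬝ᵥ w + 1 := by
      rw [add_dotProduct]
      congr 1
      simp [dotProduct, Pi.single_apply, hwj]
    rw [hdot, neg_one_val_add]
    simp [ZMod.val_one]
  · intro y _ _ h
    have h2 := congrFun h j
    simp at h2
  · intro y _
    show y + Pi.single j 1 + Pi.single j 1 = y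
    rw [add_assoc, pi_add_self, add_zero]

abbrev Fmat {m : ℕ} : Matrix (Fin m → ZMod 2) (Fin m → ZMod 2) ℂ :=
  fun x v => (-1) ^ ((x ⬝ᵥ v).val)

lemma pi_add_eq_zero_iff {m : ℕ} (x z : Fin m → ZMod 2) : x + z = 0 ↔ x = z := by
  constructor
  · intro h
    have hx : x = x + (z + z) := by rw [pi_add_self]; rw [add_zero]
    rw [hx, ← add_assoc, h, zero_add]
  · rintro rfl; exact pi_add_self x

lemma F_mul_F {m : ℕ} : (Fmat (m := m)) * Fmat = (2 ^ m : ℂ) • 1 := by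
  ext x z
  simp only [mul_apply, Matrix.smul_apply, one_apply, smul_eq_mul]
  have key : ∀ y : Fin m → ZMod 2,
      (Fmat x y) * (Fmat y z) = (-1 : ℂ) ^ ((y ⬝ᵥ (x + z)).val) := by
    intro y
    rw [dotProduct_add, neg_one_val_add, show y ⬝ᵥ x = x ⬝ᵥ y from dotProduct_comm _ _]
  rw [Finset.sum_congr rfl (fun y _ => key y)]
  by_cases h : x = z
  · subst h
    simp [pi_add_self, card_univ]
  · rw [char_sum _ (fun hc => h ((pi_add_eq_zero_iff x z).mp hc))]
    simp [h]

lemma F_mul_A {m : ℕ} (S : Finset (Fin m → ZMod 2)) :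
    (Fmat (m := m)) * adjMatrix S = (diagonal fun x => (lam S x : ℂ)) * Fmat := by
  ext x v
  rw [diagonal_mul]
  simp only [mul_apply, adjMatrix, mul_ite, mul_one, mul_zero]
  rw [← Equiv.sum_comp (Equiv.addRight v) (fun u => if u + v ∈ S then (Fmat x u) else 0)]
  simp only [Equiv.coe_addRight]
  have hc : ∀ u : Fin m → ZMod 2, u + v + v = u := by
    intro u; rw [add_assoc, pi_add_self, add_zero]
  simp only [hc]
  rw [Finset.sum_ite_mem, univ_inter]
  have key : ∀ s : Fin m → ZMod 2, (Fmat (m := m)) x (s + v)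
      = (-1 : ℂ) ^ ((x ⬝ᵥ s).val) * (-1) ^ ((x ⬝ᵥ v).val) := by
    intro s
    show (-1 : ℂ) ^ ((x ⬝ᵥ (s + v)).val) = _
    rw [dotProduct_add, neg_one_val_add]
  rw [Finset.sum_congr rfl (fun s _ => key s), ← Finset.sum_mul]
  congr 1
  unfold lam
  push_cast
  rfl

lemma H_entry {m : ℕ} (S : Finset (Fin m → ZMod 2)) (t : ℝ) (u v : Fin m → ZMod 2) :
    transferMatrix S t u v = (2 ^ m : ℂ)⁻¹ *
      ∑ x : Fin m → ZMod 2, Complex.exp (Complex.I * t * (lam S x : ℂ)) *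
        ((-1 : ℂ) ^ ((x ⬝ᵥ u).val) * (-1) ^ ((x ⬝ᵥ v).val)) := by
  have h2 : (2 ^ m : ℂ) ≠ 0 := pow_ne_zero _ two_ne_zero
  set G : Matrix (Fin m → ZMod 2) (Fin m → ZMod 2) ℂ := (2 ^ m : ℂ)⁻¹ • Fmat with hG
  have hFG : (Fmat (m := m)) * G = 1 := by
    rw [hG, Matrix.mul_smul, F_mul_F, smul_smul, inv_mul_cancel₀ h2, one_smul]
  have hGF : G * Fmat (m := m) = 1 := mul_eq_one_comm.mp hFG
  set U : (Matrix (Fin m → ZMod 2) (Fin m → ZMod 2) ℂ)ˣ := ⟨Fmat, G, hFG, hGF⟩ with hU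
  have hA0 : adjMatrix S = G * (diagonal fun x => (lam S x : ℂ)) * Fmat := by
    calc adjMatrix S = (G * Fmat) * adjMatrix S := by rw [hGF, Matrix.one_mul]
      _ = G * (Fmat * adjMatrix S) := by rw [Matrix.mul_assoc]
      _ = G * ((diagonal fun x => (lam S x : ℂ)) * Fmat) := by rw [F_mul_A S]
      _ = _ := by rw [Matrix.mul_assoc]
  have hdiag : (diagonal fun x : Fin m → ZMod 2 => Complex.I * t * (lam S x : ℂ))
      = (Complex.I * t) • diagonal (fun x => (lam S x : ℂ)) := by
    ext i j
    by_cases h : i = j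
    · subst h; simp [diagonal_apply_eq, smul_eq_mul, mul_assoc]
    · simp [diagonal_apply_ne _ h, h]
  have key : Complex.I • ((t : ℂ) • adjMatrix S)
      = G * (diagonal fun x => Complex.I * t * (lam S x : ℂ)) * Fmat := by
    rw [hdiag, Matrix.mul_smul, Matrix.smul_mul, ← hA0, smul_smul]
  have hconj := Matrix.exp_units_conj' U (diagonal fun x => Complex.I * t * (lam S x : ℂ))
  have hUinv : (↑U⁻¹ : Matrix (Fin m → ZMod 2) (Fin m → ZMod 2) ℂ) = G := rfl
  have hUval : (↑U : Matrix (Fin m → ZMod 2) (Fin m → ZMod 2) ℂ) = Fmat := rfl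
  rw [hUinv, hUval] at hconj
  have hexp : NormedSpace.exp (fun x : Fin m → ZMod 2 => Complex.I * t * (lam S x : ℂ))
      = fun x => Complex.exp (Complex.I * t * (lam S x : ℂ)) := by
    funext x
    rw [Complex.exp_eq_exp_ℂ]
    exact Pi.coe_exp _ x
  unfold transferMatrix
  rw [key, hconj, Matrix.exp_diagonal, hexp, hG]
  rw [Matrix.smul_mul, Matrix.smul_mul, Matrix.smul_apply, smul_eq_mul]
  congr 1
  rw [mul_apply]
  apply Finset.sum_congr rfl
  intro x _
  rw [mul_apply, Finset.sum_eq_single x]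
  · show (-1 : ℂ) ^ ((u ⬝ᵥ x).val) * _ * _ = _
    rw [diagonal_apply_eq, dotProduct_comm]
    ring
  · intro y _ hy
    simp [diagonal_apply_ne _ hy]
  · intro h; exact absurd (mem_univ x) h

lemma key_coeff (p q r s : ZMod 2) :
    (-1 : ℂ) ^ r.val * (-1) ^ p.val - (-1) ^ r.val * (-1) ^ q.val
      - ((-1) ^ s.val * (-1) ^ p.val - (-1) ^ s.val * (-1) ^ q.val)
    = if s + r = 1 ∧ q + p = 1 then 4 * ((-1 : ℂ) ^ r.val * (-1) ^ p.val) else 0 := by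
  rcases zmod2_cases p with rfl | rfl <;> rcases zmod2_cases q with rfl | rfl <;>
  rcases zmod2_cases r with rfl | rfl <;> rcases zmod2_cases s with rfl | rfl <;>
    norm_num [zmod2_oneone, ZMod.val_one, zmod2_val2] <;>
    simp [show (2 : ZMod 2) ≠ 1 from by decide]

theorem half_eced_H_eaeb {m : ℕ} (hm : 1 ≤ m)
    (S : Finset (Fin m → ZMod 2)) (h0 : (0 : Fin m → ZMod 2) ∉ S)
    (a b c d : Fin m → ZMod 2) (t : ℝ) :
    (1 / 2 : ℂ) * dotProduct (stdBasis c - stdBasis d)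
        (transferMatrix S t *ᵥ (stdBasis a - stdBasis b)) =
      (2 / 2 ^ m : ℂ) *
        ∑ x ∈ univ.filter (fun x : Fin m → ZMod 2 => (d + c) ⬝ᵥ x = 1 ∧ (b + a) ⬝ᵥ x = 1),
          Complex.exp (Complex.I * t * (lam S x : ℂ)) * (-1 : ℂ) ^ (x ⬝ᵥ (c + a)).val := by
  have hv : ∀ u, (transferMatrix S t *ᵥ (stdBasis a - stdBasis b)) u
      = transferMatrix S t u a - transferMatrix S t u b := by
    intro u
    simp [mulVec, dotProduct, _root_.stdBasis, mul_sub, mul_ite, Finset.sum_sub_distrib]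
  have hdp : ∀ w : (Fin m → ZMod 2) → ℂ,
      dotProduct (stdBasis c - stdBasis d) w = w c - w d := by
    intro w
    simp [dotProduct, _root_.stdBasis, sub_mul, ite_mul, Finset.sum_sub_distrib]
  have hsum :
      (∑ x : Fin m → ZMod 2, Complex.exp (Complex.I * t * (lam S x : ℂ)) *
          ((-1 : ℂ) ^ ((x ⬝ᵥ c).val) * (-1) ^ ((x ⬝ᵥ a).val)))
        - (∑ x : Fin m → ZMod 2, Complex.exp (Complex.I * t * (lam S x : ℂ)) *
          ((-1 : ℂ) ^ ((x ⬝ᵥ c).val) * (-1) ^ ((x ⬝ᵥ b).val)))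
        - ((∑ x : Fin m → ZMod 2, Complex.exp (Complex.I * t * (lam S x : ℂ)) *
          ((-1 : ℂ) ^ ((x ⬝ᵥ d).val) * (-1) ^ ((x ⬝ᵥ a).val)))
        - (∑ x : Fin m → ZMod 2, Complex.exp (Complex.I * t * (lam S x : ℂ)) *
          ((-1 : ℂ) ^ ((x ⬝ᵥ d).val) * (-1) ^ ((x ⬝ᵥ b).val))))
      = 4 * ∑ x ∈ univ.filter
            (fun x : Fin m → ZMod 2 => (d + c) ⬝ᵥ x = 1 ∧ (b + a) ⬝ᵥ x = 1),
          Complex.exp (Complex.I * t * (lam S x : ℂ)) * (-1 : ℂ) ^ (x ⬝ᵥ (c + a)).val := by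
    rw [Finset.sum_filter, Finset.mul_sum, ← Finset.sum_sub_distrib, ← Finset.sum_sub_distrib,
      ← Finset.sum_sub_distrib]
    apply Finset.sum_congr rfl
    intro x _
    have hca : (-1 : ℂ) ^ ((x ⬝ᵥ (c + a)).val)
        = (-1) ^ ((x ⬝ᵥ c).val) * (-1) ^ ((x ⬝ᵥ a).val) := by
      rw [dotProduct_add, neg_one_val_add]
    have hcond : ((d + c) ⬝ᵥ x = 1 ∧ (b + a) ⬝ᵥ x = 1)
        ↔ (x ⬝ᵥ d + x ⬝ᵥ c = 1 ∧ x ⬝ᵥ b + x ⬝ᵥ a = 1) := by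
      rw [add_dotProduct, add_dotProduct, dotProduct_comm d x, dotProduct_comm c x,
        dotProduct_comm b x, dotProduct_comm a x]
    have := key_coeff (x ⬝ᵥ a) (x ⬝ᵥ b) (x ⬝ᵥ c) (x ⬝ᵥ d)
    calc Complex.exp (Complex.I * t * (lam S x : ℂ)) *
          ((-1 : ℂ) ^ ((x ⬝ᵥ c).val) * (-1) ^ ((x ⬝ᵥ a).val))
        - Complex.exp (Complex.I * t * (lam S x : ℂ)) *
          ((-1 : ℂ) ^ ((x ⬝ᵥ c).val) * (-1) ^ ((x ⬝ᵥ b).val))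
        - (Complex.exp (Complex.I * t * (lam S x : ℂ)) *
          ((-1 : ℂ) ^ ((x ⬝ᵥ d).val) * (-1) ^ ((x ⬝ᵥ a).val))
        - Complex.exp (Complex.I * t * (lam S x : ℂ)) *
          ((-1 : ℂ) ^ ((x ⬝ᵥ d).val) * (-1) ^ ((x ⬝ᵥ b).val)))
        = Complex.exp (Complex.I * t * (lam S x : ℂ)) *
            ((-1 : ℂ) ^ ((x ⬝ᵥ c).val) * (-1) ^ ((x ⬝ᵥ a).val)
            - (-1) ^ ((x ⬝ᵥ c).val) * (-1) ^ ((x ⬝ᵥ b).val)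
            - ((-1) ^ ((x ⬝ᵥ d).val) * (-1) ^ ((x ⬝ᵥ a).val)
            - (-1) ^ ((x ⬝ᵥ d).val) * (-1) ^ ((x ⬝ᵥ b).val))) := by ring
      _ = Complex.exp (Complex.I * t * (lam S x : ℂ)) *
            (if x ⬝ᵥ d + x ⬝ᵥ c = 1 ∧ x ⬝ᵥ b + x ⬝ᵥ a = 1 then
              4 * ((-1 : ℂ) ^ ((x ⬝ᵥ c).val) * (-1) ^ ((x ⬝ᵥ a).val)) else 0) := by
            rw [this]
      _ = (if (d + c) ⬝ᵥ x = 1 ∧ (b + a) ⬝ᵥ x = 1 then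
              4 * (Complex.exp (Complex.I * t * (lam S x : ℂ)) *
                (-1 : ℂ) ^ ((x ⬝ᵥ (c + a)).val)) else 0) := by
            rw [hca]
            by_cases h : (d + c) ⬝ᵥ x = 1 ∧ (b + a) ⬝ᵥ x = 1
            · rw [if_pos h, if_pos (hcond.mp h)]; ring
            · rw [if_neg h, if_neg (fun hh => h (hcond.mpr hh)), mul_zero]
      _ = 4 * (if (d + c) ⬝ᵥ x = 1 ∧ (b + a) ⬝ᵥ x = 1 then
              Complex.exp (Complex.I * t * (lam S x : ℂ)) *
                (-1 : ℂ) ^ ((x ⬝ᵥ (c + a)).val) else 0) := by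
            rw [mul_ite, mul_zero]
  rw [hdp, hv, hv, H_entry S t c a, H_entry S t c b, H_entry S t d a, H_entry S t d b]
  linear_combination ((2 : ℂ) ^ m)⁻¹ / 2 * hsum

end
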